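/- arXiv:1007.4695 — 2 statements merged into one kernel-verified Lean document; each statement's English description precedes it below -/
import Mathlib

section
/- The curvature R of G(d) is given explicitly as follows, for x,y,z,x1,x2 ∈ d and h,h1,h2,h3 ∈ h, with β* := ℓ^{-1}∘β: (i) R(ℓ(h1),ℓ(h2))ℓ(h3) = 0; (ii) R(ℓ(h1),ℓ(h2))x = ¼π([h1,h2]_h)x; (iii) R(x,ℓ(h1))ℓ(h2) = −¼π(h1)π(h2)x; (iv) R(x1,ℓ(h))x2 = ¼[π(h)x1, x2]_d − ¼β(x1, π(h)x2); (v) R(x1,x2)ℓ(h) = −¼β(x1, π(h)x2) − ¼β(π(h)x1, x2) + ¼π(h)[x1,x2]_d; (vi) R(x,y)z = ½π(β*(x,y))z − ¼π(β*(y,z))x − ¼π(β*(z,x))y + ¼β(z,[x,y]_d) − ¼[[x,y]_d, z]_d. -/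
open Module

variable {H D : Type} [LieRing H] [LieAlgebra ℝ H] [FiniteDimensional ℝ H]
  [LieRing D] [LieAlgebra ℝ D] [FiniteDimensional ℝ D]

/-- `beta BD π x y` is the element `β(x,y)` of `h*` given by `a ↦ ⟨π(a)x, y⟩_d`. -/
def beta (BD : LinearMap.BilinForm ℝ D) (π : H →ₗ[ℝ] D →ₗ[ℝ] D) (x y : D) : Dual ℝ H :=
  (BD.flip y).comp (π.flip x)

/-- The bracket on `G(d) = d ⊕ h*`: `[x₁+α₁, x₂+α₂] = [x₁,x₂]_d + β(x₁,x₂)`. -/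
def gbr (BD : LinearMap.BilinForm ℝ D) (π : H →ₗ[ℝ] D →ₗ[ℝ] D)
    (u v : D × Dual ℝ H) : D × Dual ℝ H :=
  (⁅u.1, v.1⁆, beta BD π u.1 v.1)

/-- The inverse of the isomorphism `ℓ : h → h*`, `ℓ(h) = ⟨h,·⟩_h`. -/
noncomputable def ellInv (BH : LinearMap.BilinForm ℝ H) (hBH : BH.Nondegenerate)
    (α : Dual ℝ H) : H :=
  (LinearMap.BilinForm.toDual BH hBH).symm α

/-- The Levi-Civita connection
`∇_{x₁+ℓ(h₁)}(x₂+ℓ(h₂)) = ½([x₁,x₂]_d + β(x₁,x₂) − π(h₁)x₂ − π(h₂)x₁)`. -/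
noncomputable def nabG (BH : LinearMap.BilinForm ℝ H) (hBH : BH.Nondegenerate)
    (BD : LinearMap.BilinForm ℝ D) (π : H →ₗ[ℝ] D →ₗ[ℝ] D)
    (u v : D × Dual ℝ H) : D × Dual ℝ H :=
  ((2⁻¹ : ℝ) • (⁅u.1, v.1⁆ - π (ellInv BH hBH u.2) v.1 - π (ellInv BH hBH v.2) u.1),
   (2⁻¹ : ℝ) • beta BD π u.1 v.1)

/-- The curvature `R(w₁,w₂)w₃ = ∇_{w₁}∇_{w₂}w₃ − ∇_{w₂}∇_{w₁}w₃ − ∇_{[w₁,w₂]}w₃`. -/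
noncomputable def Rfun (BH : LinearMap.BilinForm ℝ H) (hBH : BH.Nondegenerate)
    (BD : LinearMap.BilinForm ℝ D) (π : H →ₗ[ℝ] D →ₗ[ℝ] D)
    (w₁ w₂ w₃ : D × Dual ℝ H) : D × Dual ℝ H :=
  nabG BH hBH BD π w₁ (nabG BH hBH BD π w₂ w₃)
    - nabG BH hBH BD π w₂ (nabG BH hBH BD π w₁ w₃)
    - nabG BH hBH BD π (gbr BD π w₁ w₂) w₃

/-- `β* = ℓ⁻¹ ∘ β : d × d → h`. -/
noncomputable def betaStar (BH : LinearMap.BilinForm ℝ H) (hBH : BH.Nondegenerate)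
    (BD : LinearMap.BilinForm ℝ D) (π : H →ₗ[ℝ] D →ₗ[ℝ] D) (x y : D) : H :=
  ellInv BH hBH (beta BD π x y)


/-! Since `∇_{ℓh₁}ℓh₂ = 0`, `∇_{ℓh}x = ∇_x ℓh = -½π(h)x` and `∇_x y = ½([x,y]_d + β(x,y))`,
each formula comes from expanding the three terms of `R`. What is left are the structural
identities: `π` is a homomorphism (ii), each `π(h)` is a derivation (iv, v) and skew, so that
`β` is skew-symmetric (v, vi), and (vi) also needs the Jacobi identity of `d` and the cocycle
identity `β([x,y],z) + β([y,z],x) + β([z,x],y) = 0`, i.e. the Jacobi identity of `G(d)`. -/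

open LinearMap (BilinForm)

section Bracket

variable {𝔥 𝔡 : Type} [LieRing 𝔥] [LieAlgebra ℝ 𝔥] [LieRing 𝔡] [LieAlgebra ℝ 𝔡]
  (BD : BilinForm ℝ 𝔡) (π : 𝔥 →ₗ[ℝ] 𝔡 →ₗ[ℝ] 𝔡)

@[simp] lemma beta_apply (x y : 𝔡) (a : 𝔥) : beta BD π x y a = BD (π a x) y := rfl

@[simp] lemma beta_zero_left (y : 𝔡) : beta BD π 0 y = 0 := by ext; simp

@[simp] lemma beta_zero_right (x : 𝔡) : beta BD π x 0 = 0 := by ext; simp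

@[simp] lemma beta_neg_left (x y : 𝔡) : beta BD π (-x) y = -beta BD π x y := by ext; simp

@[simp] lemma beta_neg_right (x y : 𝔡) : beta BD π x (-y) = -beta BD π x y := by ext; simp

@[simp] lemma beta_smul_right (r : ℝ) (x y : 𝔡) : beta BD π x (r • y) = r • beta BD π x y := by
  ext; simp

lemma beta_swap (hBDsymm : ∀ x y : 𝔡, BD x y = BD y x)
    (hπskew : ∀ a : 𝔥, ∀ x y : 𝔡, BD (π a x) y = - BD x (π a y)) (x y : 𝔡) :
    beta BD π y x = -beta BD π x y := by
  ext a
  simp only [beta_apply, LinearMap.neg_apply, hπskew a y x, hBDsymm y]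

lemma bilinForm_lie_cyclic (hBDsymm : ∀ x y : 𝔡, BD x y = BD y x)
    (hBDinv : ∀ x y z : 𝔡, BD ⁅x, y⁆ z = - BD y ⁅x, z⁆) (x y z : 𝔡) :
    BD ⁅y, z⁆ x = BD ⁅x, y⁆ z := by
  rw [hBDinv, hBDsymm, ← lie_skew, map_neg, LinearMap.neg_apply, neg_neg]

lemma beta_lie_cyclic (hBDsymm : ∀ x y : 𝔡, BD x y = BD y x)
    (hBDinv : ∀ x y z : 𝔡, BD ⁅x, y⁆ z = - BD y ⁅x, z⁆)
    (hπder : ∀ a : 𝔥, ∀ x y : 𝔡, π a ⁅x, y⁆ = ⁅π a x, y⁆ + ⁅x, π a y⁆)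
    (hπskew : ∀ a : 𝔥, ∀ x y : 𝔡, BD (π a x) y = - BD x (π a y)) (x y z : 𝔡) :
    beta BD π ⁅x, y⁆ z + beta BD π ⁅y, z⁆ x + beta BD π ⁅z, x⁆ y = 0 := by
  ext a
  have hcyc := bilinForm_lie_cyclic BD hBDsymm hBDinv
  have hder : BD ⁅π a x, y⁆ z + BD ⁅x, π a y⁆ z + BD ⁅x, y⁆ (π a z) = 0 := by
    rw [← LinearMap.add_apply, ← map_add, ← hπder, hπskew, neg_add_cancel]
  simp only [LinearMap.add_apply, beta_apply, hπder, map_add, LinearMap.zero_apply]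
  -- up to cyclic rotations, the six terms are twice those of `hder`
  linarith [hcyc x (π a y) z, hcyc x y (π a z), hcyc y (π a z) x, hcyc y z (π a x),
    hcyc (π a x) y z]

@[simp] lemma gbr_ell_right (u : 𝔡 × Dual ℝ 𝔥) (α : Dual ℝ 𝔥) : gbr BD π u (0, α) = 0 := by
  simp [gbr]

@[simp] lemma gbr_inl_inl (x y : 𝔡) : gbr BD π (x, 0) (y, 0) = (⁅x, y⁆, beta BD π x y) := rfl

end Bracket

section Connection

variable {𝔥 𝔡 : Type} [LieRing 𝔥] [LieAlgebra ℝ 𝔥] [FiniteDimensional ℝ 𝔥]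
  [LieRing 𝔡] [LieAlgebra ℝ 𝔡]
  (BH : BilinForm ℝ 𝔥) (hBH : BH.Nondegenerate) (BD : BilinForm ℝ 𝔡) (π : 𝔥 →ₗ[ℝ] 𝔡 →ₗ[ℝ] 𝔡)

@[simp] lemma ellInv_apply_self (h : 𝔥) : ellInv BH hBH (BH h) = h :=
  (BH.toDual hBH).symm_apply_apply h

@[simp] lemma ellInv_zero : ellInv BH hBH 0 = 0 := map_zero _

@[simp] lemma ellInv_neg (α : Dual ℝ 𝔥) : ellInv BH hBH (-α) = -ellInv BH hBH α :=
  map_neg _ α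

@[simp] lemma ellInv_smul (r : ℝ) (α : Dual ℝ 𝔥) :
    ellInv BH hBH (r • α) = r • ellInv BH hBH α :=
  map_smul _ r α

@[simp] lemma nabG_zero_left (v : 𝔡 × Dual ℝ 𝔥) : nabG BH hBH BD π 0 v = 0 := by
  simp [nabG]

@[simp] lemma nabG_ell_left (h : 𝔥) (v : 𝔡 × Dual ℝ 𝔥) :
    nabG BH hBH BD π (0, BH h) v = (-(2⁻¹ : ℝ) • π h v.1, 0) := by
  simp [nabG, neg_smul]

@[simp] lemma nabG_ell_right (u : 𝔡 × Dual ℝ 𝔥) (h : 𝔥) :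
    nabG BH hBH BD π u (0, BH h) = (-(2⁻¹ : ℝ) • π h u.1, 0) := by
  simp [nabG, neg_smul]

@[simp] lemma nabG_inl_left (x y : 𝔡) (α : Dual ℝ 𝔥) :
    nabG BH hBH BD π (x, 0) (y, α) =
      ((2⁻¹ : ℝ) • (⁅x, y⁆ - π (ellInv BH hBH α) x), (2⁻¹ : ℝ) • beta BD π x y) := by
  simp [nabG]

@[simp] lemma nabG_inl_right (x y : 𝔡) (α : Dual ℝ 𝔥) :
    nabG BH hBH BD π (x, α) (y, 0) =
      ((2⁻¹ : ℝ) • (⁅x, y⁆ - π (ellInv BH hBH α) y), (2⁻¹ : ℝ) • beta BD π x y) := by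
  simp [nabG]

lemma Rfun_ell_ell_ell (h₁ h₂ h₃ : 𝔥) :
    Rfun BH hBH BD π (0, BH h₁) (0, BH h₂) (0, BH h₃) = 0 := by
  simp [Rfun]

lemma Rfun_ell_ell_inl (hπhom : ∀ a b : 𝔥, π ⁅a, b⁆ = π a ∘ₗ π b - π b ∘ₗ π a)
    (h₁ h₂ : 𝔥) (x : 𝔡) :
    Rfun BH hBH BD π (0, BH h₁) (0, BH h₂) (x, 0) = ((4⁻¹ : ℝ) • π ⁅h₁, h₂⁆ x, 0) := by
  simp only [Rfun, nabG_inl_right, zero_lie, ellInv_apply_self, zero_sub, smul_neg,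
    beta_zero_left, smul_zero, lie_neg, lie_smul, neg_zero, map_neg, map_smul, sub_neg_eq_add,
    zero_add, beta_neg_right, beta_smul_right, Prod.mk_sub_mk, sub_self, gbr_ell_right,
    nabG_zero_left, sub_zero, Prod.mk.injEq, and_true]
  rw [hπhom, LinearMap.sub_apply, LinearMap.comp_apply, LinearMap.comp_apply]
  module

lemma Rfun_inl_ell_ell (h₁ h₂ : 𝔥) (x : 𝔡) :
    Rfun BH hBH BD π (x, 0) (0, BH h₁) (0, BH h₂) = (-(4⁻¹ : ℝ) • π h₁ (π h₂ x), 0) := by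
  simp only [Rfun, nabG_ell_right, map_zero, smul_zero, nabG_inl_right, lie_zero, ellInv_zero,
    sub_self, beta_zero_right, neg_smul, lie_neg, lie_smul, zero_lie, neg_zero, ellInv_apply_self,
    map_neg, map_smul, sub_neg_eq_add, zero_add, beta_neg_right, beta_smul_right, beta_zero_left,
    Prod.mk_sub_mk, zero_sub, gbr_ell_right, Prod.fst_zero, sub_zero, Prod.mk.injEq, neg_inj,
    and_true]
  module

lemma Rfun_inl_ell_inl (hπder : ∀ a : 𝔥, ∀ x y : 𝔡, π a ⁅x, y⁆ = ⁅π a x, y⁆ + ⁅x, π a y⁆)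
    (h : 𝔥) (x₁ x₂ : 𝔡) :
    Rfun BH hBH BD π (x₁, 0) (0, BH h) (x₂, 0) =
      ((4⁻¹ : ℝ) • ⁅π h x₁, x₂⁆, -(4⁻¹ : ℝ) • beta BD π x₁ (π h x₂)) := by
  simp only [Rfun, nabG_inl_right, zero_lie, ellInv_apply_self, zero_sub, smul_neg,
    beta_zero_left, smul_zero, lie_neg, lie_smul, ellInv_zero, map_zero, LinearMap.zero_apply,
    sub_zero, beta_neg_right, beta_smul_right, nabG_ell_left, map_smul, neg_smul,
    Prod.mk_sub_mk, sub_neg_eq_add, gbr_ell_right, nabG_zero_left, Prod.mk.injEq]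
  rw [hπder]
  constructor <;> module

lemma Rfun_inl_inl_ell (hBDsymm : ∀ x y : 𝔡, BD x y = BD y x)
    (hπder : ∀ a : 𝔥, ∀ x y : 𝔡, π a ⁅x, y⁆ = ⁅π a x, y⁆ + ⁅x, π a y⁆)
    (hπskew : ∀ a : 𝔥, ∀ x y : 𝔡, BD (π a x) y = - BD x (π a y)) (h : 𝔥) (x₁ x₂ : 𝔡) :
    Rfun BH hBH BD π (x₁, 0) (x₂, 0) (0, BH h) =
      ((4⁻¹ : ℝ) • π h ⁅x₁, x₂⁆,
        -(4⁻¹ : ℝ) • beta BD π x₁ (π h x₂) - (4⁻¹ : ℝ) • beta BD π (π h x₁) x₂) := by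
  simp only [Rfun, nabG_ell_right, neg_smul, nabG_inl_right, lie_neg, lie_smul, ellInv_zero,
    map_zero, LinearMap.zero_apply, sub_zero, smul_neg, beta_neg_right, beta_smul_right,
    Prod.mk_sub_mk, sub_neg_eq_add, gbr_inl_inl, Prod.mk.injEq]
  rw [hπder, ← lie_skew (π h x₁), beta_swap BD π hBDsymm hπskew (π h x₁) x₂]
  constructor <;> module

lemma Rfun_inl_inl_inl (hBDsymm : ∀ x y : 𝔡, BD x y = BD y x)
    (hBDinv : ∀ x y z : 𝔡, BD ⁅x, y⁆ z = - BD y ⁅x, z⁆)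
    (hπder : ∀ a : 𝔥, ∀ x y : 𝔡, π a ⁅x, y⁆ = ⁅π a x, y⁆ + ⁅x, π a y⁆)
    (hπskew : ∀ a : 𝔥, ∀ x y : 𝔡, BD (π a x) y = - BD x (π a y)) (x y z : 𝔡) :
    Rfun BH hBH BD π (x, 0) (y, 0) (z, 0) =
      ((2⁻¹ : ℝ) • π (betaStar BH hBH BD π x y) z
          - (4⁻¹ : ℝ) • π (betaStar BH hBH BD π y z) x
          - (4⁻¹ : ℝ) • π (betaStar BH hBH BD π z x) y
          - (4⁻¹ : ℝ) • ⁅⁅x, y⁆, z⁆,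
        (4⁻¹ : ℝ) • beta BD π z ⁅x, y⁆) := by
  have hswap := beta_swap BD π hBDsymm hπskew
  simp only [Rfun, nabG_inl_right, ellInv_zero, map_zero, LinearMap.zero_apply, sub_zero,
    nabG_inl_left, lie_smul, ellInv_smul, map_smul, LinearMap.smul_apply, beta_smul_right,
    Prod.mk_sub_mk, gbr_inl_inl, lie_lie, betaStar, Prod.mk.injEq]
  constructor
  · rw [hswap z x, ellInv_neg, map_neg, LinearMap.neg_apply]
    module
  · rw [hswap ⁅y, z⁆ x, hswap ⁅x, z⁆ y, hswap ⁅x, y⁆ z, ← lie_skew x z, beta_neg_left]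
    linear_combination (norm := module)
      (-4⁻¹ : ℝ) • beta_lie_cyclic BD π hBDsymm hBDinv hπder hπskew x y z

end Connection

theorem curvature_formulas_general
    (BH : LinearMap.BilinForm ℝ H)
    (hBHnd : BH.Nondegenerate)
    (BD : LinearMap.BilinForm ℝ D)
    (hBDsymm : ∀ x y : D, BD x y = BD y x)
    (hBDinv : ∀ x y z : D, BD ⁅x, y⁆ z = - BD y ⁅x, z⁆)
    (π : H →ₗ[ℝ] D →ₗ[ℝ] D)
    (hπder : ∀ a : H, ∀ x y : D, π a ⁅x, y⁆ = ⁅π a x, y⁆ + ⁅x, π a y⁆)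
    (hπhom : ∀ a b : H, π ⁅a, b⁆ = π a ∘ₗ π b - π b ∘ₗ π a)
    (hπskew : ∀ a : H, ∀ x y : D, BD (π a x) y = - BD x (π a y)) :
    -- (i) R(ℓh₁, ℓh₂)ℓh₃ = 0
    (∀ h₁ h₂ h₃ : H, Rfun BH hBHnd BD π (0, BH h₁) (0, BH h₂) (0, BH h₃) = 0) ∧
    -- (ii) R(ℓh₁, ℓh₂)x = ¼ π([h₁,h₂]) x
    (∀ (h₁ h₂ : H) (x : D),
      Rfun BH hBHnd BD π (0, BH h₁) (0, BH h₂) (x, 0)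
        = ((4⁻¹ : ℝ) • π ⁅h₁, h₂⁆ x, 0)) ∧
    -- (iii) R(x, ℓh₁)ℓh₂ = −¼ π(h₁)π(h₂)x
    (∀ (h₁ h₂ : H) (x : D),
      Rfun BH hBHnd BD π (x, 0) (0, BH h₁) (0, BH h₂)
        = (-(4⁻¹ : ℝ) • π h₁ (π h₂ x), 0)) ∧
    -- (iv) R(x₁, ℓh)x₂ = ¼[π(h)x₁, x₂]_d − ¼β(x₁, π(h)x₂)
    (∀ (h : H) (x₁ x₂ : D),
      Rfun BH hBHnd BD π (x₁, 0) (0, BH h) (x₂, 0)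
        = ((4⁻¹ : ℝ) • ⁅π h x₁, x₂⁆, -(4⁻¹ : ℝ) • beta BD π x₁ (π h x₂))) ∧
    -- (v) R(x₁,x₂)ℓh = −¼β(x₁, π(h)x₂) − ¼β(π(h)x₁, x₂) + ¼π(h)[x₁,x₂]_d
    (∀ (h : H) (x₁ x₂ : D),
      Rfun BH hBHnd BD π (x₁, 0) (x₂, 0) (0, BH h)
        = ((4⁻¹ : ℝ) • π h ⁅x₁, x₂⁆,
           -(4⁻¹ : ℝ) • beta BD π x₁ (π h x₂) - (4⁻¹ : ℝ) • beta BD π (π h x₁) x₂)) ∧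
    -- (vi) R(x,y)z = ½π(β*(x,y))z − ¼π(β*(y,z))x − ¼π(β*(z,x))y + ¼β(z,[x,y]_d)
    --      − ¼[[x,y]_d, z]_d
    (∀ x y z : D,
      Rfun BH hBHnd BD π (x, 0) (y, 0) (z, 0)
        = ((2⁻¹ : ℝ) • π (betaStar BH hBHnd BD π x y) z
            - (4⁻¹ : ℝ) • π (betaStar BH hBHnd BD π y z) x
            - (4⁻¹ : ℝ) • π (betaStar BH hBHnd BD π z x) y
            - (4⁻¹ : ℝ) • ⁅⁅x, y⁆, z⁆,
           (4⁻¹ : ℝ) • beta BD π z ⁅x, y⁆)) :=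
  ⟨Rfun_ell_ell_ell BH hBHnd BD π,
    Rfun_ell_ell_inl BH hBHnd BD π hπhom,
    Rfun_inl_ell_ell BH hBHnd BD π,
    Rfun_inl_ell_inl BH hBHnd BD π hπder,
    Rfun_inl_inl_ell BH hBHnd BD π hBDsymm hπder hπskew,
    Rfun_inl_inl_inl BH hBHnd BD π hBDsymm hBDinv hπder hπskew⟩

/-- The explicit formulas for the curvature tensor of `G(d)`. -/
theorem curvature_formulas
    (BH : LinearMap.BilinForm ℝ H)
    (hBHsymm : ∀ a b : H, BH a b = BH b a)
    (hBHnd : BH.Nondegenerate)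
    (hBHinv : ∀ a b c : H, BH ⁅a, b⁆ c = - BH b ⁅a, c⁆)
    (BD : LinearMap.BilinForm ℝ D)
    (hBDsymm : ∀ x y : D, BD x y = BD y x)
    (hBDnd : BD.Nondegenerate)
    (hBDinv : ∀ x y z : D, BD ⁅x, y⁆ z = - BD y ⁅x, z⁆)
    (π : H →ₗ[ℝ] D →ₗ[ℝ] D)
    (hπder : ∀ a : H, ∀ x y : D, π a ⁅x, y⁆ = ⁅π a x, y⁆ + ⁅x, π a y⁆)
    (hπhom : ∀ a b : H, π ⁅a, b⁆ = π a ∘ₗ π b - π b ∘ₗ π a)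
    (hπskew : ∀ a : H, ∀ x y : D, BD (π a x) y = - BD x (π a y)) :
    -- (i) R(ℓh₁, ℓh₂)ℓh₃ = 0
    (∀ h₁ h₂ h₃ : H, Rfun BH hBHnd BD π (0, BH h₁) (0, BH h₂) (0, BH h₃) = 0) ∧
    -- (ii) R(ℓh₁, ℓh₂)x = ¼ π([h₁,h₂]) x
    (∀ (h₁ h₂ : H) (x : D),
      Rfun BH hBHnd BD π (0, BH h₁) (0, BH h₂) (x, 0)
        = ((4⁻¹ : ℝ) • π ⁅h₁, h₂⁆ x, 0)) ∧
    -- (iii) R(x, ℓh₁)ℓh₂ = −¼ π(h₁)π(h₂)x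
    (∀ (h₁ h₂ : H) (x : D),
      Rfun BH hBHnd BD π (x, 0) (0, BH h₁) (0, BH h₂)
        = (-(4⁻¹ : ℝ) • π h₁ (π h₂ x), 0)) ∧
    -- (iv) R(x₁, ℓh)x₂ = ¼[π(h)x₁, x₂]_d − ¼β(x₁, π(h)x₂)
    (∀ (h : H) (x₁ x₂ : D),
      Rfun BH hBHnd BD π (x₁, 0) (0, BH h) (x₂, 0)
        = ((4⁻¹ : ℝ) • ⁅π h x₁, x₂⁆, -(4⁻¹ : ℝ) • beta BD π x₁ (π h x₂))) ∧
    -- (v) R(x₁,x₂)ℓh = −¼β(x₁, π(h)x₂) − ¼β(π(h)x₁, x₂) + ¼π(h)[x₁,x₂]_d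
    (∀ (h : H) (x₁ x₂ : D),
      Rfun BH hBHnd BD π (x₁, 0) (x₂, 0) (0, BH h)
        = ((4⁻¹ : ℝ) • π h ⁅x₁, x₂⁆,
           -(4⁻¹ : ℝ) • beta BD π x₁ (π h x₂) - (4⁻¹ : ℝ) • beta BD π (π h x₁) x₂)) ∧
    -- (vi) R(x,y)z = ½π(β*(x,y))z − ¼π(β*(y,z))x − ¼π(β*(z,x))y + ¼β(z,[x,y]_d)
    --      − ¼[[x,y]_d, z]_d
    (∀ x y z : D,
      Rfun BH hBHnd BD π (x, 0) (y, 0) (z, 0)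
        = ((2⁻¹ : ℝ) • π (betaStar BH hBHnd BD π x y) z
            - (4⁻¹ : ℝ) • π (betaStar BH hBHnd BD π y z) x
            - (4⁻¹ : ℝ) • π (betaStar BH hBHnd BD π z x) y
            - (4⁻¹ : ℝ) • ⁅⁅x, y⁆, z⁆,
           (4⁻¹ : ℝ) • beta BD π z ⁅x, y⁆)) :=
  curvature_formulas_general BH hBHnd BD hBDsymm hBDinv π hπder hπhom hπskew
end

section
/- Let F : G(d) → G(d) be a linear bijection with F(d) = d and F(h*) = h*, and write φ := F|_d, ψ := F|_{h*}. Then F is simultaneously a Lie algebra automorphism of G(d) and an isometry of ⟨,⟩ if and only if: φ is a Lie algebra automorphism of d preserving ⟨,⟩_d, ψ preserves the restriction of ⟨,⟩ to h*, and φ ∘ π(h) ∘ φ^{-1} = π(ℓ^{-1}(ψ(ℓ(h)))) for all h ∈ h. -/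
open Module

variable {H D : Type} [LieRing H] [LieAlgebra ℝ H] [FiniteDimensional ℝ H]
  [LieRing D] [LieAlgebra ℝ D] [FiniteDimensional ℝ D]

/-- The metric on `G(d)`: `⟨x₁ + ℓ(h₁), x₂ + ℓ(h₂)⟩ = ⟨h₁,h₂⟩_h + ⟨x₁,x₂⟩_d`. -/
noncomputable def gform (BH : LinearMap.BilinForm ℝ H) (hBH : BH.Nondegenerate)
    (BD : LinearMap.BilinForm ℝ D) (u v : D × Dual ℝ H) : ℝ :=
  BD u.1 v.1 + BH (ellInv BH hBH u.2) (ellInv BH hBH v.2)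

/-!
Since `F = φ × ψ`, the bracket and the metric of `G(d)` split into their `d`- and
`h*`-components, and everything reduces to comparing `ψ ∘ β` with `β ∘ (φ × φ)`.
If `ψ` preserves the metric of `h*`, then `ψ̂ := ℓ⁻¹ψℓ` satisfies `(ψ α)(ψ̂ h) = α h`, so evaluating
`ψ(β(x,y)) = β(φx,φy)` at `ψ̂ h` gives `⟨φ(π(h)x), φy⟩ = ⟨π(ψ̂ h)(φx), φy⟩`. As `φ` is onto and
`⟨,⟩_d` is nondegenerate, this is `φ ∘ π(h) = π(ψ̂ h) ∘ φ`; and `ψ̂` is onto, so the converse holds too.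
-/

set_option linter.unusedSectionVars false

section DualIdentification

variable (BH : LinearMap.BilinForm ℝ H) (hBH : BH.Nondegenerate)

@[simp]
lemma apply_ellInv (α : Dual ℝ H) : BH (ellInv BH hBH α) = α :=
  LinearMap.ext (LinearMap.BilinForm.apply_toDual_symm_apply α)

@[simp]
lemma ellInv_apply (h : H) : ellInv BH hBH (BH h) = h :=
  (LinearMap.BilinForm.toDual BH hBH).symm_apply_apply h

variable {BH hBH} {ψ : Dual ℝ H →ₗ[ℝ] Dual ℝ H}

lemma apply_ellInv_comp_apply
    (hψ : ∀ α α', BH (ellInv BH hBH (ψ α)) (ellInv BH hBH (ψ α'))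
      = BH (ellInv BH hBH α) (ellInv BH hBH α'))
    (α : Dual ℝ H) (h : H) : ψ α (ellInv BH hBH (ψ (BH h))) = α h := by
  simpa using hψ α (BH h)

lemma surjective_ellInv_comp (hψ : Function.Surjective ψ) :
    Function.Surjective fun h ↦ ellInv BH hBH (ψ (BH h)) := by
  intro h
  obtain ⟨α, hα⟩ := hψ (BH h)
  exact ⟨ellInv BH hBH α, by simp [hα]⟩

end DualIdentification

section ProdMap

variable (BH : LinearMap.BilinForm ℝ H) (hBH : BH.Nondegenerate) (BD : LinearMap.BilinForm ℝ D)
  (π : H →ₗ[ℝ] D →ₗ[ℝ] D) (φ : D →ₗ[ℝ] D) (ψ : Dual ℝ H →ₗ[ℝ] Dual ℝ H)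

lemma prodMap_gbr_iff :
    (∀ u v, Prod.map φ ψ (gbr BD π u v) = gbr BD π (Prod.map φ ψ u) (Prod.map φ ψ v)) ↔
      (∀ x y : D, φ ⁅x, y⁆ = ⁅φ x, φ y⁆) ∧
        ∀ x y : D, ψ (beta BD π x y) = beta BD π (φ x) (φ y) := by
  simp [gbr, Prod.ext_iff, forall_and]

lemma prodMap_gform_iff :
    (∀ u v, gform BH hBH BD (Prod.map φ ψ u) (Prod.map φ ψ v) = gform BH hBH BD u v) ↔
      (∀ x y : D, BD (φ x) (φ y) = BD x y) ∧
        ∀ α α' : Dual ℝ H, BH (ellInv BH hBH (ψ α)) (ellInv BH hBH (ψ α'))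
          = BH (ellInv BH hBH α) (ellInv BH hBH α') := by
  refine ⟨fun h ↦ ⟨fun x y ↦ ?_, fun α α' ↦ ?_⟩, fun ⟨hφ, hψ⟩ u v ↦ ?_⟩
  · simpa [gform] using h (x, 0) (y, 0)
  · simpa [gform] using h (0, α) (0, α')
  · simp only [gform, Prod.map_fst, Prod.map_snd, hφ, hψ]

end ProdMap

lemma map_beta_iff (BH : LinearMap.BilinForm ℝ H) (hBH : BH.Nondegenerate)
    {BD : LinearMap.BilinForm ℝ D} (hBD : BD.SeparatingLeft) (π : H →ₗ[ℝ] D →ₗ[ℝ] D)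
    {φ : D →ₗ[ℝ] D} (hφ : ∀ x y, BD (φ x) (φ y) = BD x y) (hφs : Function.Surjective φ)
    {ψ : Dual ℝ H →ₗ[ℝ] Dual ℝ H}
    (hψ : ∀ α α', BH (ellInv BH hBH (ψ α)) (ellInv BH hBH (ψ α'))
      = BH (ellInv BH hBH α) (ellInv BH hBH α'))
    (hψs : Function.Surjective ψ) :
    (∀ x y : D, ψ (beta BD π x y) = beta BD π (φ x) (φ y)) ↔
      ∀ (h : H) (x : D), φ (π h x) = π (ellInv BH hBH (ψ (BH h))) (φ x) := by
  set ψ' := fun h ↦ ellInv BH hBH (ψ (BH h))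
  have pairing (h : H) (x y : D) :
      ψ (beta BD π x y) (ψ' h) = BD (φ (π h x)) (φ y) := by
    rw [apply_ellInv_comp_apply hψ, beta, hφ]; rfl
  have separating (a b : D) : (∀ y, BD a (φ y) = BD b (φ y)) ↔ a = b := by
    refine ⟨fun hab ↦ ?_, fun hab _ ↦ hab ▸ rfl⟩
    have : BD a = BD b := LinearMap.ext (hφs.forall.2 hab)
    exact LinearMap.ker_eq_bot.1 (LinearMap.separatingLeft_iff_ker_eq_bot.1 hBD) this
  calc (∀ x y : D, ψ (beta BD π x y) = beta BD π (φ x) (φ y))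
      ↔ ∀ x y h, ψ (beta BD π x y) (ψ' h) = beta BD π (φ x) (φ y) (ψ' h) := by
        simp only [LinearMap.ext_iff]
        exact forall₂_congr fun x y ↦ (surjective_ellInv_comp hψs).forall
    _ ↔ ∀ h x, ∀ y, BD (φ (π h x)) (φ y) = BD (π (ψ' h) (φ x)) (φ y) := by
        simp only [pairing]; exact ⟨fun hxyh h x y ↦ hxyh x y h, fun hhxy x y h ↦ hhxy h x y⟩
    _ ↔ ∀ h x, φ (π h x) = π (ψ' h) (φ x) := by simp only [separating]

theorem orthogonal_automorphisms_of_Gd_general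
    (BH : LinearMap.BilinForm ℝ H)
    (hBHnd : BH.Nondegenerate)
    (BD : LinearMap.BilinForm ℝ D)
    (hBDnd : BD.Nondegenerate)
    (π : H →ₗ[ℝ] D →ₗ[ℝ] D)
    -- F is a linear bijection of G(d) with F(d) = d and F(h*) = h*,
    -- φ = F|_d and ψ = F|_{h*}
    (F : (D × Dual ℝ H) ≃ₗ[ℝ] (D × Dual ℝ H))
    (φ : D →ₗ[ℝ] D) (ψ : Dual ℝ H →ₗ[ℝ] Dual ℝ H)
    (hF : ∀ u : D × Dual ℝ H, F u = (φ u.1, ψ u.2)) :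
    -- F is an automorphism of G(d) and an isometry of ⟨,⟩ ...
    ((∀ u v : D × Dual ℝ H, F (gbr BD π u v) = gbr BD π (F u) (F v)) ∧
     (∀ u v : D × Dual ℝ H, gform BH hBHnd BD (F u) (F v) = gform BH hBHnd BD u v))
    ↔
    -- ... iff φ ∈ Aut(d) ∩ O(d,⟨,⟩_d), ψ preserves ⟨,⟩|_{h*}, and
    -- φ ∘ π(h) ∘ φ⁻¹ = π(ℓ⁻¹(ψ(ℓ(h)))) for all h ∈ h
    ((∀ x y : D, φ ⁅x, y⁆ = ⁅φ x, φ y⁆) ∧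
     (∀ x y : D, BD (φ x) (φ y) = BD x y) ∧
     (∀ α α' : Dual ℝ H,
       BH (ellInv BH hBHnd (ψ α)) (ellInv BH hBHnd (ψ α'))
         = BH (ellInv BH hBHnd α) (ellInv BH hBHnd α')) ∧
     (∀ (h : H) (x : D), φ (π h x) = π (ellInv BH hBHnd (ψ (BH h))) (φ x))) := by
  have hF' : ⇑F = Prod.map φ ψ := funext hF
  obtain ⟨hφs, hψs⟩ := Prod.map_surjective.1 (hF' ▸ F.surjective)
  rw [hF', prodMap_gbr_iff, prodMap_gform_iff]
  constructor
  · rintro ⟨⟨hbr, hβ⟩, hφ, hψ⟩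
    exact ⟨hbr, hφ, hψ, (map_beta_iff BH hBHnd hBDnd.1 π hφ hφs hψ hψs).1 hβ⟩
  · rintro ⟨hbr, hφ, hψ, hπ⟩
    exact ⟨⟨hbr, (map_beta_iff BH hBHnd hBDnd.1 π hφ hφs hψ hψs).2 hπ⟩, hφ, hψ⟩

/-- Proposition 4.4: characterization of the orthogonal automorphisms of `G(d)`
preserving the splitting `d ⊕ h*`. -/
theorem orthogonal_automorphisms_of_Gd
    (BH : LinearMap.BilinForm ℝ H)
    (hBHsymm : ∀ a b : H, BH a b = BH b a)
    (hBHnd : BH.Nondegenerate)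
    (hBHinv : ∀ a b c : H, BH ⁅a, b⁆ c = - BH b ⁅a, c⁆)
    (BD : LinearMap.BilinForm ℝ D)
    (hBDsymm : ∀ x y : D, BD x y = BD y x)
    (hBDnd : BD.Nondegenerate)
    (hBDinv : ∀ x y z : D, BD ⁅x, y⁆ z = - BD y ⁅x, z⁆)
    (π : H →ₗ[ℝ] D →ₗ[ℝ] D)
    (hπder : ∀ a : H, ∀ x y : D, π a ⁅x, y⁆ = ⁅π a x, y⁆ + ⁅x, π a y⁆)
    (hπhom : ∀ a b : H, π ⁅a, b⁆ = π a ∘ₗ π b - π b ∘ₗ π a)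
    (hπskew : ∀ a : H, ∀ x y : D, BD (π a x) y = - BD x (π a y))
    -- F is a linear bijection of G(d) with F(d) = d and F(h*) = h*,
    -- φ = F|_d and ψ = F|_{h*}
    (F : (D × Dual ℝ H) ≃ₗ[ℝ] (D × Dual ℝ H))
    (φ : D →ₗ[ℝ] D) (ψ : Dual ℝ H →ₗ[ℝ] Dual ℝ H)
    (hF : ∀ u : D × Dual ℝ H, F u = (φ u.1, ψ u.2)) :
    -- F is an automorphism of G(d) and an isometry of ⟨,⟩ ...
    ((∀ u v : D × Dual ℝ H, F (gbr BD π u v) = gbr BD π (F u) (F v)) ∧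
     (∀ u v : D × Dual ℝ H, gform BH hBHnd BD (F u) (F v) = gform BH hBHnd BD u v))
    ↔
    -- ... iff φ ∈ Aut(d) ∩ O(d,⟨,⟩_d), ψ preserves ⟨,⟩|_{h*}, and
    -- φ ∘ π(h) ∘ φ⁻¹ = π(ℓ⁻¹(ψ(ℓ(h)))) for all h ∈ h
    ((∀ x y : D, φ ⁅x, y⁆ = ⁅φ x, φ y⁆) ∧
     (∀ x y : D, BD (φ x) (φ y) = BD x y) ∧
     (∀ α α' : Dual ℝ H,
       BH (ellInv BH hBHnd (ψ α)) (ellInv BH hBHnd (ψ α'))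
         = BH (ellInv BH hBHnd α) (ellInv BH hBHnd α')) ∧
     (∀ (h : H) (x : D), φ (π h x) = π (ellInv BH hBHnd (ψ (BH h))) (φ x))) :=
  orthogonal_automorphisms_of_Gd_general BH hBHnd BD hBDnd π F φ ψ hF
end
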